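/- Constants relations for lower characteristic (1,1): with ξ = Θ[0,0;1,1](0,0) and ζ = Θ[1,1;1,1](0,0), one has θ[0,0;1,1](0,0) · θ[0,0;0,0](0,0) = ξ² + ζ² and θ[1,1;1,1](0,0) · θ[1,1;0,0](0,0) = 2ξζ. -/

import Mathlib

/-!
Both identities are instances of the duplication formula
`θ[α; β](z) θ[α'; β'](z') =
  Σ_{e ∈ {0,1}²} Θ[e + (α + α')/2; β + β'](z + z') Θ[e + (α - α')/2; β - β'](z - z')`,
which comes from writing a pair of lattice points as `(k + l + e, k - l)`, `e` being the parity of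
their difference, and from the parallelogram law `Q(u) + Q(v) = 2 Q((u + v)/2) + 2 Q((u - v)/2)`
for the quadratic form in the exponent. In both identities the mixed parities `e = (1,0), (0,1)`
contribute the odd theta constants `Θ[1,0;1,1](0,0)` and `Θ[0,1;1,1](0,0)`, which vanish; in the
second one moreover `Θ[2,2;1,1] = Θ[0,0;1,1]`.
-/

open Complex

/-- Genus-two theta function with real characteristics `a c b d`
(upper characteristics `a, c`, lower characteristics `b, d`),
moduli `τ₁ τ₂ τ₁₂` and complex arguments `x y`. -/
noncomputable def theta (τ₁ τ₂ τ₁₂ : ℂ) (a c b d : ℝ) (x y : ℂ) : ℂ :=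
  ∑' p : ℤ × ℤ,
    Complex.exp
      ((Real.pi : ℂ) * Complex.I *
          (τ₁ * ((p.1 : ℂ) + (a : ℂ) / 2) ^ 2 + τ₂ * ((p.2 : ℂ) + (c : ℂ) / 2) ^ 2 +
            2 * τ₁₂ * ((p.1 : ℂ) + (a : ℂ) / 2) * ((p.2 : ℂ) + (c : ℂ) / 2)) +
        2 * (Real.pi : ℂ) * Complex.I *
          (((p.1 : ℂ) + (a : ℂ) / 2) * (x + (b : ℂ) / 2) +
            ((p.2 : ℂ) + (c : ℂ) / 2) * (y + (d : ℂ) / 2)))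

/-- The same theta function with doubled moduli `2τ₁, 2τ₂, 2τ₁₂`. -/
noncomputable def Theta2 (τ₁ τ₂ τ₁₂ : ℂ) (a c b d : ℝ) (x y : ℂ) : ℂ :=
  theta (2 * τ₁) (2 * τ₂) (2 * τ₁₂) a c b d x y

noncomputable def thetaTerm (τ₁ τ₂ τ₁₂ : ℂ) (a c b d : ℝ) (x y : ℂ) (p : ℤ × ℤ) : ℂ :=
  Complex.exp
    ((Real.pi : ℂ) * Complex.I *
        (τ₁ * ((p.1 : ℂ) + (a : ℂ) / 2) ^ 2 + τ₂ * ((p.2 : ℂ) + (c : ℂ) / 2) ^ 2 +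
          2 * τ₁₂ * ((p.1 : ℂ) + (a : ℂ) / 2) * ((p.2 : ℂ) + (c : ℂ) / 2)) +
      2 * (Real.pi : ℂ) * Complex.I *
        (((p.1 : ℂ) + (a : ℂ) / 2) * (x + (b : ℂ) / 2) +
          ((p.2 : ℂ) + (c : ℂ) / 2) * (y + (d : ℂ) / 2)))

theorem theta_eq_tsum (τ₁ τ₂ τ₁₂ : ℂ) (a c b d : ℝ) (x y : ℂ) :
    theta τ₁ τ₂ τ₁₂ a c b d x y = ∑' p, thetaTerm τ₁ τ₂ τ₁₂ a c b d x y p :=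
  rfl

theorem norm_thetaTerm (τ₁ τ₂ τ₁₂ : ℂ) (a c b d : ℝ) (x y : ℂ) (p : ℤ × ℤ) :
    ‖thetaTerm τ₁ τ₂ τ₁₂ a c b d x y p‖ =
      Real.exp (-Real.pi * (τ₁.im * (p.1 + a / 2) ^ 2 + τ₂.im * (p.2 + c / 2) ^ 2 +
        2 * τ₁₂.im * (p.1 + a / 2) * (p.2 + c / 2)) -
        2 * Real.pi * ((p.1 + a / 2) * x.im + (p.2 + c / 2) * y.im)) := by
  have hu : (p.1 : ℂ) + (a : ℂ) / 2 = ((p.1 + a / 2 : ℝ) : ℂ) := by push_cast; rfl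
  have hv : (p.2 : ℂ) + (c : ℂ) / 2 = ((p.2 + c / 2 : ℝ) : ℂ) := by push_cast; rfl
  rw [thetaTerm, Complex.norm_exp, hu, hv]
  simp only [add_re, mul_re, mul_im, add_im, ofReal_re, ofReal_im, I_re, I_im, div_ofNat_re,
    div_ofNat_im, re_ofNat, im_ofNat, pow_two]
  ring_nf

theorem exists_pos_mul_sq_add_sq_le {t₁ t₂ t : ℝ} (h₁ : 0 < t₁) (h₂ : 0 < t₂)
    (h : t ^ 2 < t₁ * t₂) :
    ∃ ε > 0, ∀ u v : ℝ, ε * (u ^ 2 + v ^ 2) ≤ t₁ * u ^ 2 + t₂ * v ^ 2 + 2 * t * u * v := by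
  refine ⟨(t₁ * t₂ - t ^ 2) / (t₁ + t₂), div_pos (by linarith) (by linarith), fun u v => ?_⟩
  rw [div_mul_eq_mul_div, div_le_iff₀ (by linarith)]
  nlinarith [sq_nonneg (t₁ * u + t * v), sq_nonneg (t₂ * v + t * u)]

theorem summable_exp_neg_sq_shift {ε : ℝ} (hε : 0 < ε) (α s : ℝ) :
    Summable fun n : ℤ =>
      Real.exp (-Real.pi * ε * (n + α) ^ 2 - 2 * Real.pi * (n + α) * s) := by
  have h := ((summable_jacobiTheta₂_term_iff (I * (ε * α + s)) (I * ε)).mpr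
    (by simpa using hε)).norm.mul_left (Real.exp (-Real.pi * ε * α ^ 2 - 2 * Real.pi * α * s))
  refine h.congr fun n => ?_
  rw [norm_jacobiTheta₂_term, ← Real.exp_add]
  simp only [mul_im, I_re, I_im, ofReal_re, ofReal_im, add_im, add_re, mul_re]
  ring_nf

theorem summable_norm_thetaTerm {τ₁ τ₂ τ₁₂ : ℂ} (h₁ : 0 < τ₁.im) (h₂ : 0 < τ₂.im)
    (h : τ₁₂.im ^ 2 < τ₁.im * τ₂.im) (a c b d : ℝ) (x y : ℂ) :
    Summable fun p => ‖thetaTerm τ₁ τ₂ τ₁₂ a c b d x y p‖ := by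
  obtain ⟨ε, hε, hQ⟩ := exists_pos_mul_sq_add_sq_le h₁ h₂ h
  refine ((summable_exp_neg_sq_shift hε (a / 2) x.im).mul_of_nonneg
    (summable_exp_neg_sq_shift hε (c / 2) y.im) (fun _ => (Real.exp_pos _).le)
    (fun _ => (Real.exp_pos _).le)).of_nonneg_of_le (fun _ => norm_nonneg _) fun p => ?_
  rw [norm_thetaTerm, ← Real.exp_add, Real.exp_le_exp]
  nlinarith [mul_le_mul_of_nonneg_left (hQ (p.1 + a / 2) (p.2 + c / 2)) Real.pi_pos.le]

def sumDiffEquiv : Bool × ℤ × ℤ ≃ ℤ × ℤ where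
  toFun w := (w.2.1 + w.2.2 + w.1.toNat, w.2.1 - w.2.2)
  invFun z := (decide ((z.1 - z.2) % 2 = 1), (z.1 + z.2 - (z.1 - z.2) % 2) / 2,
    (z.1 - z.2 - (z.1 - z.2) % 2) / 2)
  left_inv := by
    rintro ⟨_ | _, k, l⟩ <;>
      simp only [Prod.mk.injEq, Bool.toNat_false, Bool.toNat_true, Nat.cast_zero, Nat.cast_one,
        decide_eq_true_eq, decide_eq_false_iff_not] <;>
      omega
  right_inv := by
    rintro ⟨n, m⟩
    rcases Int.emod_two_eq_zero_or_one (n - m) with h | h <;>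
      simp only [h, zero_ne_one, decide_false, decide_true, Bool.toNat_false, Bool.toNat_true,
        Nat.cast_zero, Nat.cast_one, Prod.mk.injEq] <;>
      omega

def sumDiffEquiv₂ : (Bool × Bool) × (ℤ × ℤ) × (ℤ × ℤ) ≃ (ℤ × ℤ) × (ℤ × ℤ) :=
  ((Equiv.refl _).prodCongr (Equiv.prodProdProdComm ℤ ℤ ℤ ℤ)).trans <|
    (Equiv.prodProdProdComm Bool Bool (ℤ × ℤ) (ℤ × ℤ)).trans <|
      (sumDiffEquiv.prodCongr sumDiffEquiv).trans (Equiv.prodProdProdComm ℤ ℤ ℤ ℤ)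

theorem sumDiffEquiv₂_apply (e : Bool × Bool) (k l : ℤ × ℤ) :
    sumDiffEquiv₂ (e, k, l) = (k + l + ((e.1.toNat : ℤ), (e.2.toNat : ℤ)), k - l) :=
  rfl

theorem thetaTerm_mul_thetaTerm (τ₁ τ₂ τ₁₂ : ℂ) (a c b d a' c' b' d' : ℝ) (x y x' y' : ℂ)
    (e₁ e₂ : ℤ) (k l : ℤ × ℤ) :
    thetaTerm τ₁ τ₂ τ₁₂ a c b d x y (k + l + (e₁, e₂)) *
        thetaTerm τ₁ τ₂ τ₁₂ a' c' b' d' x' y' (k - l) =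
      thetaTerm (2 * τ₁) (2 * τ₂) (2 * τ₁₂) (e₁ + (a + a') / 2) (e₂ + (c + c') / 2)
          (b + b') (d + d') (x + x') (y + y') k *
        thetaTerm (2 * τ₁) (2 * τ₂) (2 * τ₁₂) (e₁ + (a - a') / 2) (e₂ + (c - c') / 2)
          (b - b') (d - d') (x - x') (y - y') l := by
  simp only [thetaTerm, ← Complex.exp_add, Prod.fst_add, Prod.snd_add, Prod.fst_sub,
    Prod.snd_sub]
  congr 1
  push_cast
  ring

theorem theta_mul_theta {τ₁ τ₂ τ₁₂ : ℂ} (h₁ : 0 < τ₁.im) (h₂ : 0 < τ₂.im)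
    (h : τ₁₂.im ^ 2 < τ₁.im * τ₂.im) (a c b d a' c' b' d' : ℝ) (x y x' y' : ℂ) :
    theta τ₁ τ₂ τ₁₂ a c b d x y * theta τ₁ τ₂ τ₁₂ a' c' b' d' x' y' =
      ∑ e : Bool × Bool,
        Theta2 τ₁ τ₂ τ₁₂ (e.1.toNat + (a + a') / 2) (e.2.toNat + (c + c') / 2)
            (b + b') (d + d') (x + x') (y + y') *
          Theta2 τ₁ τ₂ τ₁₂ (e.1.toNat + (a - a') / 2) (e.2.toNat + (c - c') / 2)
            (b - b') (d - d') (x - x') (y - y') := by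
  have h₁' : 0 < (2 * τ₁).im := by simpa using h₁
  have h₂' : 0 < (2 * τ₂).im := by simpa using h₂
  have h' : (2 * τ₁₂).im ^ 2 < (2 * τ₁).im * (2 * τ₂).im := by
    simp only [mul_im, re_ofNat, im_ofNat, zero_mul, add_zero]
    nlinarith
  have hprod := summable_mul_of_summable_norm (summable_norm_thetaTerm h₁ h₂ h a c b d x y)
    (summable_norm_thetaTerm h₁ h₂ h a' c' b' d' x' y')
  have hsplit : Summable fun w => thetaTerm τ₁ τ₂ τ₁₂ a c b d x y (sumDiffEquiv₂ w).1 *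
      thetaTerm τ₁ τ₂ τ₁₂ a' c' b' d' x' y' (sumDiffEquiv₂ w).2 :=
    sumDiffEquiv₂.summable_iff.mpr hprod
  rw [theta_eq_tsum, theta_eq_tsum, tsum_mul_tsum_of_summable_norm
    (summable_norm_thetaTerm h₁ h₂ h a c b d x y)
    (summable_norm_thetaTerm h₁ h₂ h a' c' b' d' x' y'), ← sumDiffEquiv₂.tsum_eq,
    hsplit.tsum_prod' hsplit.prod_factor, tsum_fintype]
  refine Finset.sum_congr rfl fun e _ => ?_
  rw [Theta2, Theta2, theta_eq_tsum, theta_eq_tsum, tsum_mul_tsum_of_summable_norm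
    (summable_norm_thetaTerm h₁' h₂' h' ..) (summable_norm_thetaTerm h₁' h₂' h' ..)]
  refine tsum_congr fun ⟨k, l⟩ => ?_
  rw [sumDiffEquiv₂_apply]
  exact_mod_cast thetaTerm_mul_thetaTerm τ₁ τ₂ τ₁₂ a c b d a' c' b' d' x y x' y'
    e.1.toNat e.2.toNat k l

section Symmetries

variable (τ₁ τ₂ τ₁₂ : ℂ)

theorem theta_neg (a c b d : ℝ) (x y : ℂ) :
    theta τ₁ τ₂ τ₁₂ (-a) (-c) (-b) (-d) (-x) (-y) = theta τ₁ τ₂ τ₁₂ a c b d x y := by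
  rw [theta_eq_tsum, theta_eq_tsum, ← (Equiv.neg (ℤ × ℤ)).tsum_eq]
  refine tsum_congr fun p => ?_
  simp only [thetaTerm, Equiv.neg_apply, Prod.fst_neg, Prod.snd_neg]
  congr 1
  push_cast
  ring

theorem theta_add_two_mul_upper (a c b d : ℝ) (x y : ℂ) (k l : ℤ) :
    theta τ₁ τ₂ τ₁₂ (a + 2 * k) (c + 2 * l) b d x y = theta τ₁ τ₂ τ₁₂ a c b d x y := by
  rw [theta_eq_tsum, theta_eq_tsum,
    ← (Equiv.addRight (k, l)).tsum_eq (thetaTerm τ₁ τ₂ τ₁₂ a c b d x y)]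
  refine tsum_congr fun p => ?_
  simp only [thetaTerm, Equiv.coe_addRight, Prod.fst_add, Prod.snd_add]
  congr 1
  push_cast
  ring

theorem theta_add_two_mul_lower (a c b d : ℝ) (x y : ℂ) (k l : ℤ) :
    theta τ₁ τ₂ τ₁₂ a c (b + 2 * k) (d + 2 * l) x y =
      cexp (Real.pi * I * (a * k + c * l)) * theta τ₁ τ₂ τ₁₂ a c b d x y := by
  rw [theta_eq_tsum, theta_eq_tsum, ← tsum_mul_left]
  refine tsum_congr fun p => ?_
  rw [thetaTerm, thetaTerm, ← Complex.exp_add, Complex.exp_eq_exp_iff_exists_int]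
  exact ⟨p.1 * k + p.2 * l, by push_cast; ring⟩

theorem theta_neg_of_odd (m₁ m₂ n₁ n₂ : ℤ) (hodd : Odd (m₁ * n₁ + m₂ * n₂)) (x y : ℂ) :
    theta τ₁ τ₂ τ₁₂ m₁ m₂ n₁ n₂ (-x) (-y) = -theta τ₁ τ₂ τ₁₂ m₁ m₂ n₁ n₂ x y := by
  obtain ⟨j, hj⟩ := hodd
  have hsign : cexp (Real.pi * I * (m₁ * -n₁ + m₂ * -n₂)) = -1 := by
    rw [← Complex.exp_pi_mul_I, Complex.exp_eq_exp_iff_exists_int]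
    refine ⟨-j - 1, ?_⟩
    have hj' : (m₁ * n₁ + m₂ * n₂ : ℂ) = 2 * j + 1 := by exact_mod_cast hj
    push_cast
    linear_combination (-(Real.pi : ℂ) * I) * hj'
  calc theta τ₁ τ₂ τ₁₂ m₁ m₂ n₁ n₂ (-x) (-y)
      = theta τ₁ τ₂ τ₁₂ (m₁ + 2 * (-m₁ : ℤ)) (m₂ + 2 * (-m₂ : ℤ)) (n₁ + 2 * (-n₁ : ℤ))
          (n₂ + 2 * (-n₂ : ℤ)) x y := by
        rw [← theta_neg]; push_cast; ring_nf
    _ = -theta τ₁ τ₂ τ₁₂ m₁ m₂ n₁ n₂ x y := by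
        rw [theta_add_two_mul_upper, theta_add_two_mul_lower]
        push_cast
        rw [hsign, neg_one_mul]

theorem theta_zero_of_odd (m₁ m₂ n₁ n₂ : ℤ) (hodd : Odd (m₁ * n₁ + m₂ * n₂)) :
    theta τ₁ τ₂ τ₁₂ m₁ m₂ n₁ n₂ 0 0 = 0 := by
  have h := theta_neg_of_odd τ₁ τ₂ τ₁₂ m₁ m₂ n₁ n₂ hodd 0 0
  rwa [neg_zero, CharZero.eq_neg_self_iff] at h

end Symmetries

theorem constants_relations_11 (τ₁ τ₂ τ₁₂ : ℂ)
    (hτ₁ : 0 < τ₁.im) (hτ₂ : 0 < τ₂.im) (hτ : τ₁₂.im ^ 2 < τ₁.im * τ₂.im) :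
    theta τ₁ τ₂ τ₁₂ 0 0 1 1 0 0 * theta τ₁ τ₂ τ₁₂ 0 0 0 0 0 0 =
        Theta2 τ₁ τ₂ τ₁₂ 0 0 1 1 0 0 ^ 2 + Theta2 τ₁ τ₂ τ₁₂ 1 1 1 1 0 0 ^ 2 ∧
      theta τ₁ τ₂ τ₁₂ 1 1 1 1 0 0 * theta τ₁ τ₂ τ₁₂ 1 1 0 0 0 0 =
        2 * Theta2 τ₁ τ₂ τ₁₂ 0 0 1 1 0 0 * Theta2 τ₁ τ₂ τ₁₂ 1 1 1 1 0 0 := by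
  have hodd₁ : Theta2 τ₁ τ₂ τ₁₂ 1 0 1 1 0 0 = 0 := by
    simpa [Theta2] using theta_zero_of_odd (2 * τ₁) (2 * τ₂) (2 * τ₁₂) 1 0 1 1 (by decide)
  have hodd₂ : Theta2 τ₁ τ₂ τ₁₂ 0 1 1 1 0 0 = 0 := by
    simpa [Theta2] using theta_zero_of_odd (2 * τ₁) (2 * τ₂) (2 * τ₁₂) 0 1 1 1 (by decide)
  have hshift : Theta2 τ₁ τ₂ τ₁₂ 2 2 1 1 0 0 = Theta2 τ₁ τ₂ τ₁₂ 0 0 1 1 0 0 := by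
    simpa [Theta2] using theta_add_two_mul_upper (2 * τ₁) (2 * τ₂) (2 * τ₁₂) 0 0 1 1 0 0 1 1
  constructor
  · rw [theta_mul_theta hτ₁ hτ₂ hτ]
    norm_num [Fintype.sum_prod_type, hodd₁, hodd₂]
    ring
  · rw [theta_mul_theta hτ₁ hτ₂ hτ]
    norm_num [Fintype.sum_prod_type, hodd₁, hodd₂, hshift]
    ring
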